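/- Under a right exchange interaction of two adjacent braids, the effective state is multiplicatively conserved: for all end-node states S_{1l}, S, S_{2r} ∈ {+1,−1}, all twist triples T_1, T_2, T ∈ ℤ³, and all crossing sequences X_{1A}, X_{1B}, X_2, the output braids B'_1 = (S_{1l}, T_1 − σ_{X_{1A}}⁻¹ • T, X_{1A}, S') and B'_2 = (S', T + σ_{X_{1B}}⁻¹ • T_2, X_{1B}++X_2, S_{2r}) with S' = (−1)^{|X_{1B}|} S satisfy χ(B'_1) · χ(B'_2) = χ(B_1) · χ(B_2), where B_1 = (S_{1l}, T_1, X_{1A}++X_{1B}, S) and B_2 = (S, T_2, X_2, S_{2r}). -/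
import Mathlib


/-- A crossing generator: one of the four symbols `u`, `d`, `u⁻¹`, `d⁻¹`. -/
inductive CrossGen : Type
  | u : CrossGen
  | d : CrossGen
  | uInv : CrossGen
  | dInv : CrossGen
deriving DecidableEq

/-- The crossing value: `+1` for `u` and `d`, `-1` for `u⁻¹` and `d⁻¹`. -/
def crossVal : CrossGen → ℤ
  | .u => 1
  | .d => 1
  | .uInv => -1
  | .dInv => -1

/-- The transposition of `{1,2,3}` induced by a crossing generator:
`u, u⁻¹ ↦ (1 2)` and `d, d⁻¹ ↦ (2 3)`. -/
def genPerm : CrossGen → Equiv.Perm (Fin 3)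
  | .u => Equiv.swap 0 1
  | .uInv => Equiv.swap 0 1
  | .d => Equiv.swap 1 2
  | .dInv => Equiv.swap 1 2

/-- The permutation induced by a crossing sequence; the head of the list acts first. -/
def seqPerm : List CrossGen → Equiv.Perm (Fin 3)
  | [] => 1
  | x :: xs => seqPerm xs * genPerm x

/-- The crossing number `c(X)`: the sum of the crossing values of the entries. -/
def crossSum (X : List CrossGen) : ℤ := (X.map crossVal).sum

/-- The action `σ • T` of a permutation of `{1,2,3}` on a twist triple `T ∈ ℤ³`,
permuting the entries. -/
def permAct (σ : Equiv.Perm (Fin 3)) (T : Fin 3 → ℤ) : Fin 3 → ℤ :=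
  fun i => T (σ⁻¹ i)

/-- A braid (in unique representation): a quadruple `(S_l, T, X, S_r)` of a left
end-node state, an internal twist triple, a crossing sequence and a right
end-node state. -/
structure Braid : Type where
  Sl : ℤ
  T : Fin 3 → ℤ
  X : List CrossGen
  Sr : ℤ

/-- The effective twist `Θ(B) = T₁ + T₂ + T₃ − 2 c(X)`. -/
def effTwist (B : Braid) : ℤ := B.T 0 + B.T 1 + B.T 2 - 2 * crossSum B.X

/-- The effective state `χ(B) = (−1)^{|X|} S_l S_r`. -/
def effState (B : Braid) : ℤ := (-1) ^ B.X.length * B.Sl * B.Sr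

/-- Under a right exchange interaction, the effective state is multiplicatively conserved. -/
theorem effState_conserved_right_exchange
    (S1l S S2r : ℤ) (hS1l : S1l = 1 ∨ S1l = -1) (hS : S = 1 ∨ S = -1)
    (hS2r : S2r = 1 ∨ S2r = -1)
    (T1 T2 T : Fin 3 → ℤ) (X1A X1B X2 : List CrossGen) :
    effState ⟨S1l, T1 - permAct (seqPerm X1A)⁻¹ T, X1A, (-1) ^ X1B.length * S⟩
      * effState ⟨(-1) ^ X1B.length * S, T + permAct (seqPerm X1B)⁻¹ T2, X1B ++ X2, S2r⟩
      = effState ⟨S1l, T1, X1A ++ X1B, S⟩ * effState ⟨S, T2, X2, S2r⟩ := by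
  have hSS : S * S = 1 := by rcases hS with h | h <;> simp [h]
  simp only [effState, List.length_append, pow_add]
  ring_nf
  rw [show S ^ 2 = 1 by rw [sq, hSS],
    show ((-1:ℤ)) ^ (X1B.length * 3) = (-1) ^ X1B.length by
      rw [pow_mul]; rcases Nat.even_or_odd X1B.length with h | h <;>
        simp [h.neg_one_pow, h.neg_one_pow]]
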